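/- The set I = {S ∈ K[∂] \ {0} : L = A S⁻¹ for some A ∈ K[∂]} ∪ {0} of denominators of a fixed rational pseudodifferential operator L is a right ideal of K[∂]. -/

import Mathlib

/-- An axiomatization of the ring `R((∂⁻¹))` of pseudodifferential operators over a
commutative differential ring `(R, δ)`: elements are determined by their coefficients
`coeff A : ℤ → R` (supported in a half-line `n ≤ N`), with the product determined by
`∂ⁿ ∘ a = Σ_{j≥0} binom(n,j) δʲ(a) ∂^{n-j}`, equivalently by the symbol formula
`coeff (A∘B) k = Σ_{m+n-j=k} binom(m,j) aₘ δʲ(bₙ)`. -/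
structure PseudoDiffOps (R : Type) [CommRing R] (δ : R → R) : Type 1 where
  carrier : Type
  [ringCarrier : Ring carrier]
  /-- the embedding of `R` as the operators of order `≤ 0` with only a constant term -/
  const : R →+* carrier
  /-- the derivation `∂` as an element of the ring -/
  d : carrier
  /-- the element `∂⁻¹` -/
  dinv : carrier
  δ_add : ∀ a b : R, δ (a + b) = δ a + δ b
  δ_leibniz : ∀ a b : R, δ (a * b) = δ a * b + a * δ b
  /-- `coeff A n` is the coefficient of `∂ⁿ` in `A` -/
  coeff : carrier → ℤ → R
  coeff_injective : Function.Injective coeff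
  coeff_add : ∀ A B n, coeff (A + B) n = coeff A n + coeff B n
  coeff_one : ∀ n, coeff 1 n = if n = 0 then 1 else 0
  coeff_const : ∀ (a : R) (n), coeff (const a) n = if n = 0 then a else 0
  coeff_d : ∀ n, coeff d n = if n = 1 then 1 else 0
  coeff_dinv : ∀ n, coeff dinv n = if n = -1 then 1 else 0
  d_dinv : d * dinv = 1
  dinv_d : dinv * d = 1
  coeff_bddAbove : ∀ A, ∃ N : ℤ, ∀ n, N < n → coeff A n = 0
  exists_of_coeffs : ∀ f : ℤ → R, (∃ N : ℤ, ∀ n, N < n → f n = 0) → ∃ A, coeff A = f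
  coeff_mul : ∀ (A B : carrier) (NA NB k : ℤ),
    (∀ n, NA < n → coeff A n = 0) → (∀ n, NB < n → coeff B n = 0) →
    coeff (A * B) k =
      ∑ m ∈ Finset.Icc (k - NB) NA, ∑ j ∈ Finset.range ((NB - k + m).toNat + 1),
        ((Ring.choose m j : ℤ) : R) * (coeff A m * δ^[j] (coeff B (k + j - m)))

attribute [instance] PseudoDiffOps.ringCarrier

namespace PseudoDiffOps

variable {R : Type} [CommRing R] {δ : R → R} (P : PseudoDiffOps R δ)

/-- the order of a pseudodifferential operator: the largest `n` with `coeff A n ≠ 0`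
(junk value for `A = 0`). -/
noncomputable def ord (A : P.carrier) : ℤ := sSup {n : ℤ | P.coeff A n ≠ 0}

/-- the leading coefficient of a pseudodifferential operator -/
noncomputable def leadCoeff (A : P.carrier) : R := P.coeff A (P.ord A)

/-- `A` is a differential operator, i.e. lies in `R[∂] ⊆ R((∂⁻¹))` -/
def IsDiffOp (A : P.carrier) : Prop := ∀ n : ℤ, n < 0 → P.coeff A n = 0

/-- `A` is monic, i.e. has leading coefficient `1` -/
noncomputable def Monic (A : P.carrier) : Prop := P.leadCoeff A = 1

end PseudoDiffOps

/-!
Every nonzero pseudodifferential operator `A` has a two-sided inverse. If `A` has leading term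
`a ∂ᴺ`, then `X = A ∂⁻ᴺ a⁻¹` has leading term `1`, so `X = 1 - T` with `T` of order `≤ -1`. The
partial sums of `∑ Tⁱ` stabilise coefficientwise, because `Tⁱ` has order `≤ -i`; their limit is a
right inverse of `1 - T`. A right inverse of a right inverse is a left inverse.

Hence `S ∈ I` exactly when `S` and `L S` are both differential operators, and both conditions are
preserved by sums and by right multiplication by differential operators.
-/

namespace PseudoDiffOps

section CommRing

variable {R : Type} [CommRing R] {δ : R → R} (P : PseudoDiffOps R δ)

def coeffHom : P.carrier →+ (ℤ → R) :=
  AddMonoidHom.mk' P.coeff fun A B => funext (P.coeff_add A B)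

theorem coeff_zero (n : ℤ) : P.coeff 0 n = 0 :=
  congrFun (map_zero P.coeffHom) n

theorem coeff_sub (A B : P.carrier) (n : ℤ) :
    P.coeff (A - B) n = P.coeff A n - P.coeff B n :=
  congrFun (map_sub P.coeffHom A B) n

include P in
theorem iterate_δ_zero (j : ℕ) : δ^[j] 0 = 0 :=
  Function.iterate_fixed (by simpa using P.δ_add 0 0) j

def OrdLE (A : P.carrier) (N : ℤ) : Prop := ∀ n, N < n → P.coeff A n = 0

variable {P}

theorem OrdLE.mono {A : P.carrier} {N M : ℤ} (hA : P.OrdLE A N) (hNM : N ≤ M) : P.OrdLE A M :=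
  fun n hn => hA n (by omega)

theorem OrdLE.sub {A B : P.carrier} {N : ℤ} (hA : P.OrdLE A N) (hB : P.OrdLE B N) :
    P.OrdLE (A - B) N :=
  fun n hn => by rw [P.coeff_sub, hA n hn, hB n hn, sub_zero]

theorem ordLE_one : P.OrdLE 1 0 := fun n hn => by rw [P.coeff_one, if_neg (by omega)]

theorem ordLE_const (a : R) : P.OrdLE (P.const a) 0 :=
  fun n hn => by rw [P.coeff_const, if_neg (by omega)]

theorem ordLE_d : P.OrdLE P.d 1 := fun n hn => by rw [P.coeff_d, if_neg (by omega)]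

theorem ordLE_dinv : P.OrdLE P.dinv (-1) := fun n hn => by rw [P.coeff_dinv, if_neg (by omega)]

theorem OrdLE.mul {A B : P.carrier} {NA NB : ℤ} (hA : P.OrdLE A NA) (hB : P.OrdLE B NB) :
    P.OrdLE (A * B) (NA + NB) := fun k hk => by
  rw [P.coeff_mul A B NA NB k hA hB, Finset.Icc_eq_empty (by omega), Finset.sum_empty]

theorem OrdLE.pow {T : P.carrier} {N : ℤ} (hT : P.OrdLE T N) (i : ℕ) :
    P.OrdLE (T ^ i) (i * N) := by
  induction i with
  | zero => simpa using P.ordLE_one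
  | succ i ih => simpa [pow_succ, add_mul] using ih.mul hT

theorem coeff_mul_add {A B : P.carrier} {NA NB : ℤ} (hA : P.OrdLE A NA) (hB : P.OrdLE B NB) :
    P.coeff (A * B) (NA + NB) = P.coeff A NA * P.coeff B NB := by
  rw [P.coeff_mul A B NA NB _ hA hB, add_sub_cancel_right, Finset.Icc_self,
    Finset.sum_singleton, show (NB - (NA + NB) + NA).toNat = 0 by omega]
  simp

theorem coeff_mul_congr_right {A B B' : P.carrier} {NA k : ℤ} (hA : P.OrdLE A NA)
    (hBB' : ∀ n, k - NA ≤ n → P.coeff B n = P.coeff B' n) :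
    P.coeff (A * B) k = P.coeff (A * B') k := by
  obtain ⟨NB, hB⟩ := P.coeff_bddAbove B
  obtain ⟨NB', hB'⟩ := P.coeff_bddAbove B'
  rw [P.coeff_mul A B NA (max NB NB') k hA fun n hn => hB n (by omega),
    P.coeff_mul A B' NA (max NB NB') k hA fun n hn => hB' n (by omega)]
  refine Finset.sum_congr rfl fun m hm => Finset.sum_congr rfl fun j _ => ?_
  rw [hBB' _ (by rw [Finset.mem_Icc] at hm; omega)]

end CommRing

section Field

variable {K : Type} [Field K] {δ : K → K} {P : PseudoDiffOps K δ}

@[simps]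
def dUnit (P : PseudoDiffOps K δ) : P.carrierˣ := ⟨P.d, P.dinv, P.d_dinv, P.dinv_d⟩

theorem ordLE_and_coeff_dUnit_zpow (N : ℤ) :
    P.OrdLE ↑(P.dUnit ^ N) N ∧ P.coeff ↑(P.dUnit ^ N) N = 1 := by
  induction N using Int.induction_on with
  | zero => rw [zpow_zero, Units.val_one]; exact ⟨P.ordLE_one, by rw [P.coeff_one, if_pos rfl]⟩
  | succ i ih =>
    rw [zpow_add_one, Units.val_mul, val_dUnit]
    exact ⟨ih.1.mul P.ordLE_d, by
      rw [P.coeff_mul_add ih.1 P.ordLE_d, ih.2, P.coeff_d, if_pos rfl, one_mul]⟩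
  | pred i ih =>
    rw [zpow_sub_one, Units.val_mul, val_inv_dUnit, sub_eq_add_neg]
    exact ⟨ih.1.mul P.ordLE_dinv, by
      rw [P.coeff_mul_add ih.1 P.ordLE_dinv, ih.2, P.coeff_dinv, if_pos rfl, one_mul]⟩

theorem exists_mul_eq_one_of_ordLE_neg_one {T : P.carrier} (hT : P.OrdLE T (-1)) :
    ∃ B, (1 - T) * B = 1 := by
  have hpow (i : ℕ) : P.OrdLE (T ^ i) (-i) := by simpa using hT.pow i
  have hstable (n : ℤ) (M : ℕ) (hM : (1 - n).toNat ≤ M) :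
      P.coeff (∑ i ∈ Finset.range M, T ^ i) n =
        P.coeff (∑ i ∈ Finset.range (1 - n).toNat, T ^ i) n := by
    induction M, hM using Nat.le_induction with
    | base => rfl
    | succ M hM ih => rw [Finset.sum_range_succ, P.coeff_add, ih, hpow M n (by omega), add_zero]
  obtain ⟨B, hB⟩ :=
    P.exists_of_coeffs (fun n => P.coeff (∑ i ∈ Finset.range (1 - n).toNat, T ^ i) n)
    ⟨0, fun n hn => by rw [show (1 - n).toNat = 0 by omega]; exact P.coeff_zero n⟩
  refine ⟨B, P.coeff_injective (funext fun k => ?_)⟩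
  have h1T : P.OrdLE (1 - T) 0 := P.ordLE_one.sub (hT.mono (by omega))
  calc P.coeff ((1 - T) * B) k
        = P.coeff ((1 - T) * ∑ i ∈ Finset.range (1 - k).toNat, T ^ i) k :=
        coeff_mul_congr_right h1T fun n hn => by rw [hB, hstable n _ (by omega)]
    _ = P.coeff (1 - T ^ (1 - k).toNat) k := by rw [mul_neg_geom_sum]
    _ = P.coeff 1 k := by rw [P.coeff_sub, hpow _ k (by omega), sub_zero]

theorem exists_ordLE_coeff_ne_zero {A : P.carrier} (hA : A ≠ 0) :
    ∃ N, P.OrdLE A N ∧ P.coeff A N ≠ 0 := by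
  obtain ⟨M, hM⟩ := P.coeff_bddAbove A
  have hne : ∃ n, P.coeff A n ≠ 0 := by
    by_contra! h
    exact hA (P.coeff_injective (funext fun n => by rw [h n, P.coeff_zero]))
  obtain ⟨N, hN, hmax⟩ := Int.exists_greatest_of_bdd (P := fun n => P.coeff A n ≠ 0)
    ⟨M, fun n hn => by by_contra h; exact hn (hM n (by omega))⟩ hne
  exact ⟨N, fun n hn => by by_contra h; exact absurd (hmax n h) (by omega), hN⟩

theorem exists_mul_eq_one {A : P.carrier} (hA : A ≠ 0) : ∃ B, A * B = 1 := by
  obtain ⟨N, hAN, hlead⟩ := exists_ordLE_coeff_ne_zero hA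
  set V := ↑(P.dUnit ^ (-N)) * P.const (P.coeff A N)⁻¹
  obtain ⟨hD, hD1⟩ := ordLE_and_coeff_dUnit_zpow (P := P) (-N)
  have hV : P.OrdLE V (-N) := by
    simpa only [add_zero] using hD.mul (P.ordLE_const (P.coeff A N)⁻¹)
  have hAV : P.OrdLE (A * V) 0 := by simpa only [add_neg_cancel] using hAN.mul hV
  have hV0 : P.coeff V (-N) = (P.coeff A N)⁻¹ := by
    have h := P.coeff_mul_add hD (P.ordLE_const (P.coeff A N)⁻¹)
    rwa [add_zero, hD1, one_mul, P.coeff_const, if_pos rfl] at h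
  have hAV0 : P.coeff (A * V) 0 = 1 := by
    rw [← add_neg_cancel N, P.coeff_mul_add hAN hV, hV0, mul_inv_cancel₀ hlead]
  obtain ⟨B, hB⟩ := exists_mul_eq_one_of_ordLE_neg_one (T := 1 - A * V) fun n hn => by
    rw [P.coeff_sub, P.coeff_one]
    rcases (show n = 0 ∨ 0 < n by omega) with rfl | hn
    · rw [if_pos rfl, hAV0, sub_self]
    · rw [if_neg hn.ne', hAV n hn, sub_zero]
  exact ⟨V * B, by rwa [sub_sub_cancel, mul_assoc] at hB⟩

theorem isUnit_of_ne_zero {A : P.carrier} (hA : A ≠ 0) : IsUnit A := by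
  obtain ⟨B, hAB⟩ := exists_mul_eq_one hA
  have hB0 : B ≠ 0 := by
    rintro rfl
    exact hA (by rw [← mul_one A, ← hAB, mul_zero, mul_zero])
  obtain ⟨C, hBC⟩ := exists_mul_eq_one hB0
  have hAC : A = C := by rw [← mul_one A, ← hBC, ← mul_assoc, hAB, one_mul]
  exact ⟨⟨A, B, hAB, hAC ▸ hBC⟩, rfl⟩

theorem isDiffOp_zero : P.IsDiffOp 0 := fun n _ => P.coeff_zero n

theorem isDiffOp_add {A B : P.carrier} (hA : P.IsDiffOp A) (hB : P.IsDiffOp B) :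
    P.IsDiffOp (A + B) :=
  fun n hn => by rw [P.coeff_add, hA n hn, hB n hn, add_zero]

theorem isDiffOp_mul {A B : P.carrier} (hA : P.IsDiffOp A) (hB : P.IsDiffOp B) :
    P.IsDiffOp (A * B) := by
  intro k hk
  obtain ⟨NA, hNA⟩ := P.coeff_bddAbove A
  obtain ⟨NB, hNB⟩ := P.coeff_bddAbove B
  rw [P.coeff_mul A B (max NA 0) (max NB 0) k (fun n hn => hNA n (by omega))
    (fun n hn => hNB n (by omega))]
  refine Finset.sum_eq_zero fun m _ => Finset.sum_eq_zero fun j _ => ?_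
  rcases lt_or_ge m 0 with hm | hm
  · rw [hA m hm, zero_mul, mul_zero]
  rcases lt_or_ge (k + j - m) 0 with hkjm | hkjm
  · rw [hB _ hkjm, P.iterate_δ_zero, mul_zero, mul_zero]
  · -- here `0 ≤ m < j`, so the binomial coefficient vanishes
    lift m to ℕ using hm
    rw [Ring.choose_natCast, Nat.choose_eq_zero_of_lt (by omega), Nat.cast_zero, Int.cast_zero,
      zero_mul]

def denominators (P : PseudoDiffOps K δ) (L : P.carrier) : Set P.carrier :=
  {S | P.IsDiffOp S ∧ S ≠ 0 ∧ ∃ A, P.IsDiffOp A ∧ L = A * Ring.inverse S} ∪ {0}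

theorem denominators_eq (L : P.carrier) :
    P.denominators L = {S | P.IsDiffOp S ∧ P.IsDiffOp (L * S)} := by
  ext S
  constructor
  · rintro (⟨hS, hS0, A, hA, rfl⟩ | rfl)
    · refine ⟨hS, ?_⟩
      rwa [mul_assoc, Ring.inverse_mul_cancel _ (isUnit_of_ne_zero hS0), mul_one]
    · exact ⟨isDiffOp_zero, by rw [mul_zero]; exact isDiffOp_zero⟩
  · rintro ⟨hS, hLS⟩
    by_cases hS0 : S = 0
    · exact Or.inr hS0
    · exact Or.inl ⟨hS, hS0, L * S, hLS, by
        rw [mul_assoc, Ring.mul_inverse_cancel _ (isUnit_of_ne_zero hS0), mul_one]⟩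

end Field

end PseudoDiffOps

theorem denominators_right_ideal_general {K : Type} [Field K] {δ : K → K}
    (P : PseudoDiffOps K δ) (L : P.carrier) :
    let I : Set P.carrier :=
      {S : P.carrier | P.IsDiffOp S ∧ S ≠ 0 ∧
        ∃ A : P.carrier, P.IsDiffOp A ∧ L = A * Ring.inverse S} ∪ {0}
    (∀ x ∈ I, ∀ y ∈ I, x + y ∈ I) ∧
    (∀ x ∈ I, ∀ r : P.carrier, P.IsDiffOp r → x * r ∈ I) := by
  intro I
  have hI : I = {S | P.IsDiffOp S ∧ P.IsDiffOp (L * S)} := P.denominators_eq L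
  rw [hI]
  refine ⟨fun x hx y hy => ⟨P.isDiffOp_add hx.1 hy.1, ?_⟩,
    fun x hx r hr => ⟨P.isDiffOp_mul hx.1 hr, ?_⟩⟩
  · rw [mul_add]
    exact P.isDiffOp_add hx.2 hy.2
  · rw [← mul_assoc]
    exact P.isDiffOp_mul hx.2 hr

/-- the set `I = {S ∈ K[∂] \ {0} : L = A S⁻¹ for some A ∈ K[∂]} ∪ {0}`
of denominators of a fixed rational pseudodifferential operator `L` is a right ideal
of `K[∂]`. -/
theorem denominators_right_ideal {K : Type} [Field K] [CharZero K] {δ : K → K}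
    (P : PseudoDiffOps K δ) (L : P.carrier)
    (hL : ∃ A S : P.carrier, P.IsDiffOp A ∧ P.IsDiffOp S ∧ S ≠ 0 ∧
      L = A * Ring.inverse S) :
    let I : Set P.carrier :=
      {S : P.carrier | P.IsDiffOp S ∧ S ≠ 0 ∧
        ∃ A : P.carrier, P.IsDiffOp A ∧ L = A * Ring.inverse S} ∪ {0}
    (∀ x ∈ I, ∀ y ∈ I, x + y ∈ I) ∧
    (∀ x ∈ I, ∀ r : P.carrier, P.IsDiffOp r → x * r ∈ I) :=
  denominators_right_ideal_general P L
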